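/- Let C = {M_1, M_2, M_3, M_4} be a chiral partition of H, and let Γ be the group {[A] ∈ G/{±I} : det A = 1}, where G = {A ∈ O(4,ℝ) : A·{-1,1}^4 = {-1,1}^4}. Then the homomorphism from Γ to the symmetric group on the four parts {M_1, M_2, M_3, M_4} given by the induced action on H is surjective: every permutation of the four matchings is induced by some element of Γ. In particular, Γ acts transitively on {M_1, M_2, M_3, M_4} and there exist elements of Γ inducing a 4-cycle and a 3-cycle on the matchings. -/

import Mathlib

open scoped Classical

noncomputable section

abbrev V4 := Fin 4 → ℝ

def cubeSet : Set V4 := {v | ∀ i, v i = 1 ∨ v i = -1}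

abbrev CubeV := {v : V4 // v ∈ cubeSet}

/-- `v` and `w` differ in exactly the coordinate `i`. -/
def diffExactly {n : ℕ} (v w : Fin n → ℝ) (i : Fin n) : Prop := ∀ j, v j ≠ w j ↔ j = i

/-- `v` and `w` differ in exactly one coordinate. -/
def diffOne {n : ℕ} (v w : Fin n → ℝ) : Prop := ∃ i, diffExactly v w i

instance antipodalSetoid : Setoid CubeV where
  r v w := (v : V4) = (w : V4) ∨ (v : V4) = -(w : V4)
  iseqv := by
    constructor
    · exact fun v => Or.inl rfl
    · rintro v w (h | h)
      · exact Or.inl h.symm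
      · right; rw [h, neg_neg]
    · rintro u v w (h1 | h1) (h2 | h2)
      · exact Or.inl (h1.trans h2)
      · exact Or.inr (h1.trans h2)
      · right; rw [h1, h2]
      · left; rw [h1, h2, neg_neg]

/-- vertices of the hemi-hypercube: antipodal pairs of vertices of the hypercube -/
def HVert := Quotient antipodalSetoid

/-- the hemi-hypercube graph -/
def H : SimpleGraph HVert where
  Adj x y := x ≠ y ∧ ∃ v w : CubeV, (⟦v⟧ : HVert) = x ∧ (⟦w⟧ : HVert) = y ∧
    diffOne (v : V4) (w : V4)
  symm := ⟨by
    rintro x y ⟨hxy, v, w, hv, hw, i, hi⟩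
    exact ⟨hxy.symm, w, v, hw, hv, i, fun j => by rw [← hi j]; exact ne_comm⟩⟩
  loopless := ⟨by rintro x ⟨h, -⟩; exact h rfl⟩

/-- the direction class `D i` -/
def D (i : Fin 4) : Set (Sym2 HVert) :=
  {e | e ∈ H.edgeSet ∧ ∃ v w : CubeV,
    e = s((⟦v⟧ : HVert), (⟦w⟧ : HVert)) ∧ diffExactly (v : V4) (w : V4) i}

/-- a set of edges of `G` is a perfect matching -/
def IsPM {V : Type*} (G : SimpleGraph V) (M : Set (Sym2 V)) : Prop :=
  M ⊆ G.edgeSet ∧ ∀ v : V, ∃! e : Sym2 V, e ∈ M ∧ v ∈ e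

/-- a chiral partition of `H`: a partition of the edge set of `H` into four perfect
matchings, each containing exactly one edge from each direction class. -/
def IsChiralPartition (M : Fin 4 → Set (Sym2 HVert)) : Prop :=
  (∀ k, IsPM H (M k)) ∧
  (∀ e ∈ H.edgeSet, ∃! k, e ∈ M k) ∧
  (∀ k i, ∃! e, e ∈ M k ∧ e ∈ D i)

/-- the subgroup of `O(4,ℝ)` of matrices mapping the hypercube vertex set `{-1,1}^4`
onto itself -/
def bigG : Subgroup (Matrix.orthogonalGroup (Fin 4) ℝ) where
  carrier := {A | Matrix.mulVec ((A : Matrix.orthogonalGroup (Fin 4) ℝ) :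
    Matrix (Fin 4) (Fin 4) ℝ) '' cubeSet = cubeSet}
  one_mem' := by
    show Matrix.mulVec ((1 : Matrix.orthogonalGroup (Fin 4) ℝ) : Matrix (Fin 4) (Fin 4) ℝ)
        '' cubeSet = cubeSet
    rw [Matrix.UnitaryGroup.one_val]
    ext v
    constructor
    · rintro ⟨w, hw, rfl⟩; rwa [Matrix.one_mulVec]
    · intro hv; exact ⟨v, hv, Matrix.one_mulVec v⟩
  mul_mem' := by
    intro A B hA hB
    show Matrix.mulVec ((A * B : Matrix.orthogonalGroup (Fin 4) ℝ) : Matrix (Fin 4) (Fin 4) ℝ)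
        '' cubeSet = cubeSet
    rw [Matrix.UnitaryGroup.mul_val]
    have hfun : (fun v : V4 => Matrix.mulVec (A : Matrix (Fin 4) (Fin 4) ℝ)
        (Matrix.mulVec (B : Matrix (Fin 4) (Fin 4) ℝ) v))
        = Matrix.mulVec ((A : Matrix (Fin 4) (Fin 4) ℝ) * (B : Matrix (Fin 4) (Fin 4) ℝ)) :=
      funext fun v => Matrix.mulVec_mulVec v _ _
    calc Matrix.mulVec ((A : Matrix (Fin 4) (Fin 4) ℝ) * (B : Matrix (Fin 4) (Fin 4) ℝ)) '' cubeSet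
        = (fun v : V4 => Matrix.mulVec (A : Matrix (Fin 4) (Fin 4) ℝ)
            (Matrix.mulVec (B : Matrix (Fin 4) (Fin 4) ℝ) v)) '' cubeSet := by rw [hfun]
      _ = Matrix.mulVec (A : Matrix (Fin 4) (Fin 4) ℝ)
            '' (Matrix.mulVec (B : Matrix (Fin 4) (Fin 4) ℝ) '' cubeSet) :=
          (Set.image_image _ _ _).symm
      _ = Matrix.mulVec (A : Matrix (Fin 4) (Fin 4) ℝ) '' cubeSet := by rw [hB]
      _ = cubeSet := hA
  inv_mem' := by
    intro A hA
    show Matrix.mulVec ((A⁻¹ : Matrix.orthogonalGroup (Fin 4) ℝ) : Matrix (Fin 4) (Fin 4) ℝ)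
        '' cubeSet = cubeSet
    conv_lhs => rw [← hA]
    rw [Set.image_image]
    have hfun : (fun v : V4 => Matrix.mulVec ((A⁻¹ : Matrix.orthogonalGroup (Fin 4) ℝ) :
        Matrix (Fin 4) (Fin 4) ℝ) (Matrix.mulVec (A : Matrix (Fin 4) (Fin 4) ℝ) v)) = id := by
      funext v
      show Matrix.mulVec _ (Matrix.mulVec _ v) = v
      rw [Matrix.mulVec_mulVec]
      have h1 : ((A⁻¹ : Matrix.orthogonalGroup (Fin 4) ℝ) : Matrix (Fin 4) (Fin 4) ℝ)
          * (A : Matrix (Fin 4) (Fin 4) ℝ) = 1 := by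
        rw [Matrix.UnitaryGroup.inv_val]
        exact A.2.1
      rw [h1, Matrix.one_mulVec]
    rw [hfun, Set.image_id]

lemma negOne_mem_orth : (-1 : Matrix (Fin 4) (Fin 4) ℝ) ∈ Matrix.orthogonalGroup (Fin 4) ℝ := by
  rw [Matrix.mem_orthogonalGroup_iff]
  simp

lemma negG_mem : (⟨-1, negOne_mem_orth⟩ : Matrix.orthogonalGroup (Fin 4) ℝ) ∈ bigG := by
  show Matrix.mulVec (-1 : Matrix (Fin 4) (Fin 4) ℝ) '' cubeSet = cubeSet
  have h : Matrix.mulVec (-1 : Matrix (Fin 4) (Fin 4) ℝ) = fun v : V4 => -v := by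
    funext v
    rw [Matrix.neg_mulVec, Matrix.one_mulVec]
  rw [h]
  ext v
  constructor
  · rintro ⟨w, hw, rfl⟩ i
    rcases hw i with h' | h' <;> simp [h']
  · intro hv
    exact ⟨-v, fun i => by rcases hv i with h' | h' <;> simp [h'], by simp⟩

/-- the element `-I` of `G` -/
def negG : bigG := ⟨⟨-1, negOne_mem_orth⟩, negG_mem⟩

instance zpowersNegGNormal : (Subgroup.zpowers negG).Normal := by
  have hc : ∀ g : bigG, Commute negG g := by
    intro g
    have h1 : (negG : Matrix.orthogonalGroup (Fin 4) ℝ) * (g : Matrix.orthogonalGroup (Fin 4) ℝ)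
        = (g : Matrix.orthogonalGroup (Fin 4) ℝ) * (negG : Matrix.orthogonalGroup (Fin 4) ℝ) := by
      apply Subtype.ext
      show (-1 : Matrix (Fin 4) (Fin 4) ℝ) * _ = _ * (-1 : Matrix (Fin 4) (Fin 4) ℝ)
      rw [neg_one_mul, mul_neg_one]
    exact Subtype.ext h1
  constructor
  intro x hx g
  rcases Subgroup.mem_zpowers_iff.mp hx with ⟨k, rfl⟩
  have h2 : Commute (negG ^ k) g := (hc g).zpow_left k
  have h3 : g * negG ^ k * g⁻¹ = negG ^ k := by
    calc g * negG ^ k * g⁻¹ = negG ^ k * g * g⁻¹ := by rw [← h2.eq]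
      _ = negG ^ k := mul_inv_cancel_right _ _
  rw [h3]
  exact hx

/-- the quotient group `G/{±I}` -/
abbrev QG := bigG ⧸ Subgroup.zpowers negG

/-- the matrix underlying an element of `G` -/
def matOf (A : bigG) : Matrix (Fin 4) (Fin 4) ℝ :=
  ((A : Matrix.orthogonalGroup (Fin 4) ℝ) : Matrix (Fin 4) (Fin 4) ℝ)

/-- `f : G/{±I} → Aut H` is the natural action of `G/{±I}` on the vertices of `H`,
i.e. the class of `A` sends the antipodal pair of `v` to the antipodal pair of `A·v`. -/
def IsNaturalAction (f : QG →* (H ≃g H)) : Prop :=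
  ∀ (A : bigG) (v : CubeV), ∃ w : CubeV,
    (w : V4) = Matrix.mulVec (matOf A) (v : V4) ∧
    (f (QuotientGroup.mk A)) (⟦v⟧ : HVert) = (⟦w⟧ : HVert)

/-- the determinant condition `det A = 1`, well defined on classes in `G/{±I}` -/
def DetOne (x : QG) : Prop :=
  ∀ A : bigG, (QuotientGroup.mk A : QG) = x → (matOf A).det = 1

/-!
In dimension `4` antipodal vertices of the cube have the same parity, so `H` is the complete
bipartite graph between the four even and the four odd vertices of `H`. Index the even vertices
`u` and the directions `i` by `(ZMod 2)²`, realised as `Fin 4` with `^^^`. A part of a chiral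
partition is then a map `u ↦ i` that is injective and whose edges have distinct odd endpoints,
and a finite check shows that it is `u ↦ a ^^^ R u` for a constant `a` and one of the two
automorphisms `R` of order `3`. Disjoint parts use the same `R`, so a chiral partition is, up
to relabelling its parts, the colouring `(u, i) ↦ i ^^^ R u`. For each `R`, a coordinate swap
composed with one sign change (a signed permutation matrix of determinant `1`) acts on these
colours as `finRotate 4`, and another as `swap 0 1`. These generate the symmetric group, and the
permutations of the parts induced by `Γ` form a subgroup.
-/

namespace HemiHypercube

abbrev Bits := Fin 4 → Bool

def flipAt (i : Fin 4) (b : Bits) : Bits := fun j => if j = i then !b j else b j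

def antipode (b : Bits) : Bits := fun j => !b j

def SameVertex (b c : Bits) : Prop := c = b ∨ c = antipode b

instance : DecidableRel SameVertex := fun _ _ => inferInstanceAs (Decidable (_ ∨ _))

def toCube (b : Bits) : CubeV :=
  ⟨fun j => if b j then 1 else -1, fun j => by by_cases h : b j <;> simp [h]⟩

def vertex (b : Bits) : HVert := ⟦toCube b⟧

def edge (b : Bits) (i : Fin 4) : Sym2 HVert := s(vertex b, vertex (flipAt i b))

lemma toCube_apply_eq_iff (b c : Bits) (j : Fin 4) :
    (toCube b : V4) j = (toCube c : V4) j ↔ b j = c j := by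
  simp only [toCube]
  cases b j <;> cases c j <;> norm_num

lemma toCube_injective : Function.Injective toCube := fun b c h =>
  funext fun j => (toCube_apply_eq_iff b c j).mp (by rw [h])

lemma toCube_surjective : Function.Surjective toCube := fun v =>
  ⟨fun j => decide ((v : V4) j = 1), Subtype.ext <| funext fun j => by
    rcases v.2 j with h | h <;> norm_num [toCube, h]⟩

lemma toCube_antipode (b : Bits) : (toCube (antipode b) : V4) = -(toCube b : V4) := by
  funext j
  by_cases h : b j <;> simp [toCube, antipode, h]

lemma vertex_eq_vertex_iff {b c : Bits} : vertex b = vertex c ↔ SameVertex b c := by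
  have hc : (toCube c : V4) = -(toCube b : V4) ↔ c = antipode b := by
    rw [← toCube_antipode, Subtype.val_inj, toCube_injective.eq_iff]
  constructor
  · intro h
    rcases Quotient.exact h with h | h
    · exact Or.inl (toCube_injective (Subtype.ext h)).symm
    · exact Or.inr (hc.mp (by rw [h, neg_neg]))
  · rintro (rfl | h)
    · rfl
    · exact Quotient.sound (Or.inr (by rw [hc.mpr h, neg_neg]))

lemma diffExactly_toCube_iff {b c : Bits} {i : Fin 4} :
    diffExactly (toCube b : V4) (toCube c : V4) i ↔ c = flipAt i b := by
  simp only [diffExactly, ne_eq, toCube_apply_eq_iff, funext_iff, flipAt]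
  refine forall_congr' fun j => ?_
  by_cases hj : j = i <;> cases b j <;> cases c j <;> simp [hj]

lemma edge_eq_edge_iff {b c : Bits} {i j : Fin 4} :
    edge b i = edge c j ↔ (SameVertex b c ∧ SameVertex (flipAt i b) (flipAt j c)) ∨
      (SameVertex b (flipAt j c) ∧ SameVertex (flipAt i b) c) := by
  simp only [edge, Sym2.eq_iff, vertex_eq_vertex_iff]

lemma vertex_mem_edge_iff {b c : Bits} {i : Fin 4} :
    vertex c ∈ edge b i ↔ SameVertex c b ∨ SameVertex c (flipAt i b) := by
  simp only [edge, Sym2.mem_iff, vertex_eq_vertex_iff]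

lemma not_sameVertex_flipAt : ∀ (b : Bits) (i : Fin 4), ¬SameVertex b (flipAt i b) := by
  decide

lemma edge_mem_D (b : Bits) (i : Fin 4) : edge b i ∈ D i := by
  have hdiff := diffExactly_toCube_iff.mpr (rfl : flipAt i b = flipAt i b)
  refine ⟨⟨?_, toCube b, toCube (flipAt i b), rfl, rfl, i, hdiff⟩, _, _, rfl, hdiff⟩
  rw [Ne, vertex_eq_vertex_iff]
  exact not_sameVertex_flipAt b i

lemma exists_edge_eq {e : Sym2 HVert} (he : e ∈ H.edgeSet) : ∃ b i, edge b i = e := by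
  induction e using Sym2.ind with
  | _ x y =>
    obtain ⟨-, v, w, rfl, rfl, i, hvw⟩ := he
    obtain ⟨b, rfl⟩ := toCube_surjective v
    obtain ⟨c, rfl⟩ := toCube_surjective w
    rw [diffExactly_toCube_iff.mp hvw]
    exact ⟨b, i, rfl⟩

def evenRep : Fin 4 → Bits :=
  ![![false, false, false, false], ![false, false, true, true],
    ![false, true, false, true], ![false, true, true, false]]

def IsOdd (b : Bits) : Bool := b 0 ^^ b 1 ^^ b 2 ^^ b 3

def evenIndex (b : Bits) : Fin 4 :=
  if b 0 ^^ b 1 then (if b 0 ^^ b 2 then 3 else 2) else (if b 0 ^^ b 2 then 1 else 0)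

def evenEndpointIndex (b : Bits) (i : Fin 4) : Fin 4 :=
  evenIndex (if IsOdd b then flipAt i b else b)

def evenEdge (u i : Fin 4) : Sym2 HVert := edge (evenRep u) i

lemma edge_eq_evenEdge (b : Bits) (i : Fin 4) : edge b i = evenEdge (evenEndpointIndex b i) i := by
  rw [evenEdge, edge_eq_edge_iff]
  revert b i
  decide

lemma evenEdge_inj {u u' i i' : Fin 4} (h : evenEdge u i = evenEdge u' i') : u = u' ∧ i = i' := by
  rw [evenEdge, evenEdge, edge_eq_edge_iff] at h
  revert u u' i i'
  decide

lemma vertex_evenRep_mem_evenEdge_iff {u u' i : Fin 4} :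
    vertex (evenRep u) ∈ evenEdge u' i ↔ u = u' := by
  rw [evenEdge, vertex_mem_edge_iff]
  revert u u' i
  decide

lemma exists_evenEdge_eq {e : Sym2 HVert} (he : e ∈ H.edgeSet) : ∃ u i, evenEdge u i = e := by
  obtain ⟨b, i, rfl⟩ := exists_edge_eq he
  exact ⟨_, _, (edge_eq_evenEdge b i).symm⟩

/-- The two automorphisms of order `3` of `(Fin 4, ^^^) ≅ (ZMod 2)²`. -/
def rot : Bool → Fin 4 → Fin 4
  | true => ![0, 3, 1, 2]
  | false => ![0, 2, 3, 1]

def stdColor (L : Bool) (u i : Fin 4) : Fin 4 := i ^^^ rot L u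

/-- The edges `evenEdge u (q u)` have distinct directions and distinct odd endpoints, i.e. they
form a perfect matching with one edge in each direction class. -/
def IsTransversal (q : Fin 4 → Fin 4) : Prop :=
  Function.Injective q ∧
    ∀ u u', SameVertex (flipAt (q u) (evenRep u)) (flipAt (q u') (evenRep u')) → u = u'

instance : DecidablePred IsTransversal := fun _ => inferInstanceAs (Decidable (_ ∧ _))

set_option maxRecDepth 10000 in
lemma IsTransversal.exists_eq_xor_rot :
    ∀ q : Fin 4 → Fin 4, IsTransversal q → ∃ L a, ∀ u, q u = a ^^^ rot L u := by
  decide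

lemma eq_of_forall_xor_rot_ne :
    ∀ (L L' : Bool) (a a' : Fin 4), (∀ u, a ^^^ rot L u ≠ a' ^^^ rot L' u) → L = L' := by
  decide

end HemiHypercube

open HemiHypercube

namespace IsChiralPartition

variable {M : Fin 4 → Set (Sym2 HVert)}

lemma index_eq_of_mem (hM : IsChiralPartition M) {e : Sym2 HVert} {k k' : Fin 4}
    (hk : e ∈ M k) (hk' : e ∈ M k') : k = k' :=
  (hM.2.1 e ((hM.1 k).1 hk)).unique hk hk'

lemma edge_eq_of_mem_of_mem (hM : IsChiralPartition M) {e e' : Sym2 HVert} {x : HVert}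
    {k : Fin 4} (he : e ∈ M k) (he' : e' ∈ M k) (hx : x ∈ e) (hx' : x ∈ e') : e = e' :=
  ((hM.1 k).2 x).unique ⟨he, hx⟩ ⟨he', hx'⟩

lemma existsUnique_evenEdge_mem (hM : IsChiralPartition M) (k u : Fin 4) :
    ∃! i, evenEdge u i ∈ M k := by
  obtain ⟨e, ⟨he, hx⟩, -⟩ := (hM.1 k).2 (vertex (evenRep u))
  obtain ⟨u', i, rfl⟩ := exists_evenEdge_eq ((hM.1 k).1 he)
  obtain rfl := vertex_evenRep_mem_evenEdge_iff.mp hx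
  refine ⟨i, he, fun i' hi' => (evenEdge_inj (u := u) (u' := u) ?_).2⟩
  exact hM.edge_eq_of_mem_of_mem hi' he (vertex_evenRep_mem_evenEdge_iff.mpr rfl) hx

lemma isTransversal (hM : IsChiralPartition M) {k : Fin 4} {q : Fin 4 → Fin 4}
    (hq : ∀ u, evenEdge u (q u) ∈ M k) : IsTransversal q := by
  refine ⟨fun u u' h => ?_, fun u u' h => ?_⟩
  · have hu : evenEdge u (q u') ∈ M k := h ▸ hq u
    exact (evenEdge_inj ((hM.2.2 k (q u')).unique ⟨hu, edge_mem_D _ _⟩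
      ⟨hq u', edge_mem_D _ _⟩)).1
  · have hx : vertex (flipAt (q u) (evenRep u)) ∈ evenEdge u' (q u') := by
      rw [vertex_eq_vertex_iff.mpr h]
      exact Sym2.mem_mk_right _ _
    exact (evenEdge_inj (hM.edge_eq_of_mem_of_mem (hq u) (hq u') (Sym2.mem_mk_right _ _) hx)).1

lemma exists_stdColor (hM : IsChiralPartition M) :
    ∃ (L : Bool) (σ : Equiv.Perm (Fin 4)), ∀ u i, evenEdge u i ∈ M (σ (stdColor L u i)) := by
  choose q hq using fun k u => (hM.existsUnique_evenEdge_mem k u).exists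
  choose L a hLa using fun k => IsTransversal.exists_eq_xor_rot (q k) (hM.isTransversal (hq k))
  have hdisj : ∀ {k k'}, k ≠ k' → ∀ u, q k u ≠ q k' u := fun {k k'} hkk' u h =>
    hkk' (hM.index_eq_of_mem (hq k u) (h ▸ hq k' u))
  have hL : ∀ k, L k = L 0 := fun k => by
    by_cases hk : k = 0
    · rw [hk]
    · exact eq_of_forall_xor_rot_ne _ _ (a k) (a 0) fun u => by
        rw [← hLa, ← hLa]
        exact hdisj hk u
  have ha : Function.Injective a := fun k k' h => by
    by_contra hkk'
    exact hdisj hkk' 0 (by rw [hLa, hLa, h, hL k, hL k'])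
  let σ := Equiv.ofBijective a (Finite.injective_iff_bijective.mp ha)
  refine ⟨L 0, σ.symm, fun u i => ?_⟩
  have hxor : ∀ i r : Fin 4, i ^^^ r ^^^ r = i := by decide
  have hq' : q (σ.symm (stdColor (L 0) u i)) u = i := by
    rw [hLa, hL (σ.symm _), show a _ = _ from σ.apply_symm_apply _, stdColor, hxor]
  simpa only [hq'] using hq (σ.symm (stdColor (L 0) u i)) u

end IsChiralPartition

section Action

open Matrix

lemma mulVec_mem_cubeSet (A : bigG) {v : V4} (hv : v ∈ cubeSet) : matOf A *ᵥ v ∈ cubeSet :=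
  A.2 ▸ Set.mem_image_of_mem _ hv

def cubeAct (A : bigG) (v : CubeV) : CubeV := ⟨matOf A *ᵥ v, mulVec_mem_cubeSet A v.2⟩

def vertexAct (A : bigG) : HVert → HVert :=
  Quotient.map (cubeAct A) fun _ _ h =>
    h.imp (congrArg (matOf A *ᵥ ·)) fun h => by simp only [cubeAct, h, mulVec_neg]

lemma vertexAct_mul (A B : bigG) (x : HVert) :
    vertexAct (A * B) x = vertexAct A (vertexAct B x) := by
  induction x using Quotient.ind
  exact congrArg _ (Subtype.ext (mulVec_mulVec _ (matOf A) (matOf B)).symm)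

lemma vertexAct_one (x : HVert) : vertexAct 1 x = x := by
  induction x using Quotient.ind
  exact congrArg _ (Subtype.ext (one_mulVec (_ : V4)))

lemma vertexAct_inv_vertexAct (A : bigG) (x : HVert) : vertexAct A⁻¹ (vertexAct A x) = x := by
  rw [← vertexAct_mul, inv_mul_cancel, vertexAct_one]

lemma diffOne_iff_card_eq_one {n : ℕ} (v w : Fin n → ℝ) :
    diffOne v w ↔ (Finset.univ.filter fun j => v j ≠ w j).card = 1 := by
  simp only [diffOne, diffExactly, Finset.card_eq_one, Finset.ext_iff, Finset.mem_filter,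
    Finset.mem_univ, true_and, Finset.mem_singleton]

lemma sub_dotProduct_sub_eq_four_mul_card {v w : V4} (hv : v ∈ cubeSet) (hw : w ∈ cubeSet) :
    (v - w) ⬝ᵥ (v - w) = 4 * (Finset.univ.filter fun j => v j ≠ w j).card := by
  have hterm : ∀ j, (v j - w j) * (v j - w j) = 4 * if v j ≠ w j then 1 else 0 := by
    intro j
    rcases hv j with h | h <;> rcases hw j with h' | h' <;> norm_num [h, h']
  simp only [dotProduct, Pi.sub_apply, hterm, ← Finset.mul_sum, Finset.sum_boole]

lemma diffOne_iff_dotProduct {v w : V4} (hv : v ∈ cubeSet) (hw : w ∈ cubeSet) :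
    diffOne v w ↔ (v - w) ⬝ᵥ (v - w) = 4 := by
  rw [diffOne_iff_card_eq_one, sub_dotProduct_sub_eq_four_mul_card hv hw]
  constructor
  · intro h
    rw [h]
    norm_num
  · intro h
    exact_mod_cast (by linarith : ((Finset.univ.filter fun j => v j ≠ w j).card : ℝ) = 1)

lemma transpose_mul_matOf (A : bigG) : (matOf A)ᵀ * matOf A = 1 :=
  (Matrix.mem_orthogonalGroup_iff' _ _).mp (A : Matrix.orthogonalGroup (Fin 4) ℝ).2

lemma dotProduct_matOf_mulVec (A : bigG) (x y : V4) :
    (matOf A *ᵥ x) ⬝ᵥ (matOf A *ᵥ y) = x ⬝ᵥ y := by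
  rw [dotProduct_mulVec, ← mulVec_transpose, mulVec_mulVec, transpose_mul_matOf, one_mulVec]

lemma diffOne_cubeAct (A : bigG) {v w : CubeV} (h : diffOne (v : V4) w) :
    diffOne (cubeAct A v : V4) (cubeAct A w) := by
  rw [diffOne_iff_dotProduct v.2 w.2] at h
  rw [diffOne_iff_dotProduct (cubeAct A v).2 (cubeAct A w).2]
  simpa only [cubeAct, ← mulVec_sub, dotProduct_matOf_mulVec] using h

lemma adj_vertexAct (A : bigG) {x y : HVert} (h : H.Adj x y) :
    H.Adj (vertexAct A x) (vertexAct A y) := by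
  obtain ⟨hxy, v, w, rfl, rfl, hvw⟩ := h
  refine ⟨fun h => hxy ?_, _, _, rfl, rfl, diffOne_cubeAct A hvw⟩
  exact (vertexAct_inv_vertexAct A _).symm.trans
    ((congrArg (vertexAct A⁻¹) h).trans (vertexAct_inv_vertexAct A _))

def vertexIso (A : bigG) : H ≃g H where
  toFun := vertexAct A
  invFun := vertexAct A⁻¹
  left_inv := vertexAct_inv_vertexAct A
  right_inv x := by simpa only [inv_inv] using vertexAct_inv_vertexAct A⁻¹ x
  map_rel_iff' := ⟨fun h => by
    simpa only [Equiv.coe_fn_mk, vertexAct_inv_vertexAct] using adj_vertexAct A⁻¹ h,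
    adj_vertexAct A⟩

def autHom : bigG →* (H ≃g H) where
  toFun := vertexIso
  map_one' := RelIso.ext vertexAct_one
  map_mul' A B := RelIso.ext (vertexAct_mul A B)

lemma negG_mem_ker_autHom : negG ∈ autHom.ker := by
  refine RelIso.ext fun x => Quotient.inductionOn x fun v => Quotient.sound (Or.inr ?_)
  show (-1 : Matrix (Fin 4) (Fin 4) ℝ) *ᵥ (v : V4) = -(v : V4)
  rw [neg_mulVec, one_mulVec]

def hemiAction : QG →* (H ≃g H) :=
  QuotientGroup.lift _ autHom (Subgroup.zpowers_le.mpr negG_mem_ker_autHom)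

lemma isNaturalAction_hemiAction : IsNaturalAction hemiAction :=
  fun A v => ⟨cubeAct A v, rfl, rfl⟩

end Action

section Determinant

def detUnits : bigG →* ℝˣ :=
  (Matrix.detMonoidHom.comp ((Matrix.orthogonalGroup (Fin 4) ℝ).subtype.comp
    bigG.subtype)).toHomUnits

lemma negG_mem_ker_detUnits : negG ∈ detUnits.ker := by
  refine Units.ext ?_
  show (-1 : Matrix (Fin 4) (Fin 4) ℝ).det = 1
  rw [Matrix.det_neg, Matrix.det_one, Fintype.card_fin]
  norm_num

/-- Well defined because `det (-I) = 1` in dimension `4`. -/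
def detQ : QG →* ℝˣ :=
  QuotientGroup.lift _ detUnits (Subgroup.zpowers_le.mpr negG_mem_ker_detUnits)

lemma detOne_iff (x : QG) : DetOne x ↔ x ∈ detQ.ker := by
  obtain ⟨A, rfl⟩ := QuotientGroup.mk_surjective x
  refine ⟨fun h => Units.ext (h A rfl), fun h A' hA' => ?_⟩
  rw [← hA'] at h
  exact congrArg Units.val h

end Determinant

section SignedPerm

open Matrix

def signAct (p : Equiv.Perm (Fin 4)) (ε b : Bits) : Bits := fun j => ε j ^^ b (p j)

lemma signAct_flipAt (p : Equiv.Perm (Fin 4)) (ε b : Bits) (i : Fin 4) :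
    signAct p ε (flipAt i b) = flipAt (p.symm i) (signAct p ε b) := by
  funext j
  by_cases hj : j = p.symm i <;>
    simp [signAct, flipAt, hj, ← Equiv.eq_symm_apply]

lemma signAct_injective (p : Equiv.Perm (Fin 4)) (ε : Bits) : Function.Injective (signAct p ε) :=
  fun b c h => funext fun j => by
    simpa [signAct] using congrFun h (p.symm j)

def signedPermMatrix (p : Equiv.Perm (Fin 4)) (ε : Bits) : Matrix (Fin 4) (Fin 4) ℝ :=
  diagonal (fun j => if ε j then -1 else 1) * p.permMatrix ℝ

lemma signedPermMatrix_mulVec_toCube (p : Equiv.Perm (Fin 4)) (ε b : Bits) :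
    signedPermMatrix p ε *ᵥ (toCube b : V4) = toCube (signAct p ε b) := by
  rw [signedPermMatrix, ← mulVec_mulVec, permMatrix_mulVec]
  funext j
  rw [mulVec_diagonal]
  simp only [toCube, signAct, Function.comp_apply]
  by_cases h : ε j <;> by_cases h' : b (p j) <;> simp [h, h']

lemma signedPermMatrix_mem_orthogonalGroup (p : Equiv.Perm (Fin 4)) (ε : Bits) :
    signedPermMatrix p ε ∈ orthogonalGroup (Fin 4) ℝ := by
  rw [mem_orthogonalGroup_iff, signedPermMatrix, transpose_mul, transpose_permMatrix,
    diagonal_transpose, mul_assoc, ← mul_assoc (p.permMatrix ℝ), ← permMatrix_mul,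
    inv_mul_cancel, permMatrix_one, one_mul, diagonal_mul_diagonal, ← diagonal_one]
  congr 1
  funext j
  by_cases h : ε j <;> simp [h]

lemma cubeSet_eq_range : cubeSet = Set.range fun b => (toCube b : V4) := by
  ext v
  exact ⟨fun hv => (toCube_surjective ⟨v, hv⟩).imp fun _ h => congrArg Subtype.val h,
    fun ⟨b, hb⟩ => hb ▸ (toCube b).2⟩

lemma signedPermMatrix_image_cubeSet (p : Equiv.Perm (Fin 4)) (ε : Bits) :
    (signedPermMatrix p ε *ᵥ ·) '' cubeSet = cubeSet := by
  rw [cubeSet_eq_range, ← Set.range_comp]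
  simp only [Function.comp_def, signedPermMatrix_mulVec_toCube]
  exact (Finite.injective_iff_surjective.mp (signAct_injective p ε)).range_comp
    fun b => (toCube b : V4)

def signedPerm (p : Equiv.Perm (Fin 4)) (ε : Bits) : bigG :=
  ⟨⟨signedPermMatrix p ε, signedPermMatrix_mem_orthogonalGroup p ε⟩,
    signedPermMatrix_image_cubeSet p ε⟩

lemma det_signedPermMatrix_swap {a b : Fin 4} (hab : a ≠ b) (j : Fin 4) :
    (signedPermMatrix (Equiv.swap a b) fun k => k = j).det = 1 := by
  simp [signedPermMatrix, det_diagonal, Equiv.Perm.sign_swap hab, Finset.prod_ite_eq']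

lemma hemiAction_signedPerm_vertex (p : Equiv.Perm (Fin 4)) (ε b : Bits) :
    hemiAction (QuotientGroup.mk (signedPerm p ε)) (vertex b) = vertex (signAct p ε b) :=
  congrArg _ (Subtype.ext (signedPermMatrix_mulVec_toCube p ε b))

lemma map_hemiAction_signedPerm_evenEdge (p : Equiv.Perm (Fin 4)) (ε : Bits) (u i : Fin 4) :
    Sym2.map (hemiAction (QuotientGroup.mk (signedPerm p ε))) (evenEdge u i) =
      evenEdge (evenEndpointIndex (signAct p ε (evenRep u)) (p.symm i)) (p.symm i) := by
  rw [← edge_eq_evenEdge, evenEdge, edge, edge, Sym2.map_mk, hemiAction_signedPerm_vertex,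
    hemiAction_signedPerm_vertex, signAct_flipAt]

end SignedPerm

section InducedPerms

variable {V Q ι : Type*} {G : SimpleGraph V} [Group Q]

def inducedPerms (ρ : Q →* (G ≃g G)) (Γ : Subgroup Q) (M : ι → Set (Sym2 V)) :
    Subgroup (Equiv.Perm ι) where
  carrier := {σ | ∃ x ∈ Γ, ∀ k, Sym2.map (ρ x) '' M k = M (σ k)}
  one_mem' := ⟨1, Γ.one_mem, fun k => by simp⟩
  mul_mem' := by
    rintro σ τ ⟨x, hx, hσ⟩ ⟨y, hy, hτ⟩
    refine ⟨x * y, Γ.mul_mem hx hy, fun k => ?_⟩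
    rw [map_mul, RelIso.coe_mul, Sym2.map_comp, Set.image_comp, hτ, hσ]
    rfl
  inv_mem' := by
    rintro σ ⟨x, hx, hσ⟩
    refine ⟨x⁻¹, Γ.inv_mem hx, fun k => ?_⟩
    have h := hσ (σ⁻¹ k)
    rw [show σ (σ⁻¹ k) = k from σ.apply_symm_apply k] at h
    rw [← h, Set.image_image]
    simp [Sym2.map_map]

lemma image_map_eq_of_forall_mem {M : ι → Set (Sym2 V)} (hsub : ∀ k, M k ⊆ G.edgeSet)
    (hpart : ∀ e ∈ G.edgeSet, ∃! k, e ∈ M k) (φ : G ≃g G) (σ : Equiv.Perm ι)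
    (h : ∀ k, ∀ e ∈ M k, Sym2.map φ e ∈ M (σ k)) (k : ι) :
    Sym2.map φ '' M k = M (σ k) := by
  refine (Set.image_subset_iff.mpr (h k)).antisymm fun e he => ?_
  have he' : Sym2.map φ.symm e ∈ G.edgeSet := (φ.symm.map_mem_edgeSet_iff).mpr (hsub _ he)
  obtain ⟨k', hk', -⟩ := hpart _ he'
  have hφ : Sym2.map φ (Sym2.map φ.symm e) = e := by simp [Sym2.map_map]
  obtain rfl : k' = k := σ.injective ((hpart e (hsub _ he)).unique (hφ ▸ h k' _ hk') he)
  exact ⟨_, hk', hφ⟩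

end InducedPerms

lemma exists_swap_acting_on_stdColor (L : Bool) {τ : Equiv.Perm (Fin 4)}
    (hτ : τ ∈ ({finRotate 4, Equiv.swap 0 1} : Set (Equiv.Perm (Fin 4)))) :
    ∃ a b j : Fin 4, a ≠ b ∧ ∀ u i,
      stdColor L (evenEndpointIndex (signAct (Equiv.swap a b) (fun k => k = j) (evenRep u))
        ((Equiv.swap a b).symm i)) ((Equiv.swap a b).symm i) = τ (stdColor L u i) := by
  rcases hτ with rfl | rfl <;> cases L
  · exact ⟨0, 1, 1, by decide, by decide⟩
  · exact ⟨1, 2, 2, by decide, by decide⟩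
  · exact ⟨1, 2, 3, by decide, by decide⟩
  · exact ⟨1, 3, 2, by decide, by decide⟩

namespace IsChiralPartition

variable {M : Fin 4 → Set (Sym2 HVert)}

lemma mem_inducedPerms (hM : IsChiralPartition M) {L : Bool} {σ : Equiv.Perm (Fin 4)}
    (hσ : ∀ u i, evenEdge u i ∈ M (σ (stdColor L u i))) {p τ : Equiv.Perm (Fin 4)} {ε : Bits}
    (hdet : (signedPermMatrix p ε).det = 1)
    (hτ : ∀ u i, stdColor L (evenEndpointIndex (signAct p ε (evenRep u)) (p.symm i)) (p.symm i) =
      τ (stdColor L u i)) :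
    σ * τ * σ⁻¹ ∈ inducedPerms hemiAction detQ.ker M := by
  refine ⟨QuotientGroup.mk (signedPerm p ε), Units.ext hdet,
    image_map_eq_of_forall_mem (fun k => (hM.1 k).1) hM.2.1 _ _ fun k e he => ?_⟩
  obtain ⟨u, i, rfl⟩ := exists_evenEdge_eq ((hM.1 k).1 he)
  obtain rfl := hM.index_eq_of_mem (hσ u i) he
  rw [map_hemiAction_signedPerm_evenEdge]
  convert hσ _ _ using 2
  simp [hτ]

lemma inducedPerms_eq_top (hM : IsChiralPartition M) :
    inducedPerms hemiAction detQ.ker M = ⊤ := by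
  obtain ⟨L, σ, hσ⟩ := hM.exists_stdColor
  have hgen : Subgroup.closure {finRotate 4, Equiv.swap 0 1} ≤
      (inducedPerms hemiAction detQ.ker M).comap (MulAut.conj σ).toMonoidHom := by
    rw [Subgroup.closure_le]
    intro τ hτ
    obtain ⟨a, b, j, hab, h⟩ := exists_swap_acting_on_stdColor L hτ
    exact hM.mem_inducedPerms hσ (det_signedPermMatrix_swap hab j) h
  have hclosure : Subgroup.closure {finRotate 4, Equiv.swap (0 : Fin 4) 1} = ⊤ := by
    simpa using Equiv.Perm.closure_cycle_adjacent_swap isCycle_finRotate support_finRotate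
      (0 : Fin 4)
  rw [hclosure] at hgen
  refine eq_top_iff.mpr fun τ _ => ?_
  simpa [mul_assoc] using hgen (Subgroup.mem_top (σ⁻¹ * τ * σ))

end IsChiralPartition

/-- for a chiral partition `{M k}` of `H`, the action of
`Γ = {[A] ∈ G/{±I} : det A = 1}` on the four matchings is surjective onto the
symmetric group on the parts: every permutation of the four matchings is induced by
some element of `Γ`. -/
theorem stmt_18 :
    ∀ M : Fin 4 → Set (Sym2 HVert), IsChiralPartition M →
      ∃ f : QG →* (H ≃g H), IsNaturalAction f ∧
        ∀ σ : Equiv.Perm (Fin 4), ∃ x : QG, DetOne x ∧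
          ∀ k : Fin 4, Sym2.map ⇑(f x) '' M k = M (σ k) := by
  intro M hM
  refine ⟨hemiAction, isNaturalAction_hemiAction, fun σ => ?_⟩
  obtain ⟨x, hx, hσ⟩ : σ ∈ inducedPerms hemiAction detQ.ker M :=
    hM.inducedPerms_eq_top ▸ Subgroup.mem_top σ
  exact ⟨x, (detOne_iff x).mpr hx, hσ⟩
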